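/- arXiv:2602.00859 — 3 statements merged into one kernel-verified Lean document; each statement's English description precedes it below -/
import Mathlib

section
/- Let μ : A → R be a feasible assignment, let m ≥ 1, let a_0, a_1, …, a_{m−1} be pairwise-distinct agents, and let r* ∈ R be a resource with residual capacity under μ, i.e., |μ^{-1}(r*)| < q(r*). Suppose each agent a_i with i < m−1 strictly prefers μ(a_{i+1}) to μ(a_i), and a_{m−1} strictly prefers r* to μ(a_{m−1}). Define μ′ by μ′(a_i) = μ(a_{i+1}) for i < m−1, μ′(a_{m−1}) = r*, and μ′(b) = μ(b) for every other agent b. Then μ′ is feasible and μ′ Pareto-dominates μ: every agent on the chain is strictly better off and every other agent's assignment is unchanged. In particular, μ is not Pareto optimal. -/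
/-- An assignment is feasible if no resource exceeds its capacity. -/
def Feasible {A R : Type*} [Fintype A] [DecidableEq R] (q : R → ℕ) (μ : A → R) : Prop :=
  ∀ r : R, (Finset.univ.filter fun x : A => μ x = r).card ≤ q r

/-- `μ'` Pareto-dominates `μ`: every agent is weakly better off and some agent is
strictly better off (preferences `pref a` are strict orders). -/
def ParetoDominates {A R : Type*} (pref : A → R → R → Prop) (μ' μ : A → R) : Prop :=
  (∀ a : A, μ' a = μ a ∨ pref a (μ' a) (μ a)) ∧ ∃ a : A, pref a (μ' a) (μ a)

/-- `μ` is Pareto optimal if no feasible assignment Pareto-dominates it. -/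
def ParetoOptimal {A R : Type*} [Fintype A] [DecidableEq R]
    (q : R → ℕ) (pref : A → R → R → Prop) (μ : A → R) : Prop :=
  ∀ μ' : A → R, Feasible q μ' → ¬ ParetoDominates pref μ' μ

/-!
Closing the chain into a cycle `a₀ ↦ a₁ ↦ ⋯ ↦ a_{m-1} ↦ a₀` gives a permutation `σ` of the
agents, and `μ'` is `μ ∘ σ` with the single entry at `a_{m-1}` overwritten by `r*`. Composing
with a permutation does not enlarge any fiber, and the overwrite adds at most one agent to the
fiber of `r*`, where there was spare capacity.
-/

open Finset Function

section Feasibility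

variable {A R : Type*} [Fintype A] [DecidableEq R]

theorem card_filter_comp_le_of_injective (μ : A → R) {σ : A → A} (hσ : Injective σ) (r : R) :
    (univ.filter fun x => μ (σ x) = r).card ≤ (univ.filter fun x => μ x = r).card :=
  card_le_card_of_injOn σ (fun x hx => by simpa using hx) hσ.injOn

theorem Feasible.comp_injective {q : R → ℕ} {μ : A → R} (h : Feasible q μ) {σ : A → A}
    (hσ : Injective σ) : Feasible q (μ ∘ σ) :=
  fun r => (card_filter_comp_le_of_injective μ hσ r).trans (h r)

theorem Feasible.update [DecidableEq A] {q : R → ℕ} {ν : A → R} (h : Feasible q ν) (z : A) {r : R}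
    (hr : (univ.filter fun x => ν x = r).card < q r) : Feasible q (Function.update ν z r) := by
  intro s
  by_cases hs : s = r
  · subst hs
    calc (univ.filter fun x => Function.update ν z s x = s).card
        ≤ (insert z (univ.filter fun x => ν x = s)).card := by
          refine card_le_card fun x hx => ?_
          by_cases hxz : x = z
          · simp [hxz]
          · exact mem_insert_of_mem (by simpa [update_of_ne hxz] using hx)
      _ ≤ (univ.filter fun x => ν x = s).card + 1 := card_insert_le _ _
      _ ≤ q s := hr
  · refine le_trans (card_le_card fun x hx => ?_) (h s)
    by_cases hxz : x = z
    · exact absurd (by simpa [hxz] using hx) (Ne.symm hs)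
    · simpa [update_of_ne hxz] using hx

end Feasibility

theorem finRotate_mk_of_succ_lt {m i : ℕ} (h : i + 1 < m) :
    finRotate m ⟨i, by omega⟩ = ⟨i + 1, h⟩ := by
  cases m with
  | zero => omega
  | succ n => exact finRotate_of_lt (by omega)

theorem ParetoDominates.of_strict_on_range {A R ι : Type*} [Nonempty ι]
    {pref : A → R → R → Prop} {μ' μ : A → R} (a : ι → A)
    (hstrict : ∀ i, pref (a i) (μ' (a i)) (μ (a i)))
    (hfix : ∀ b, (∀ i, a i ≠ b) → μ' b = μ b) : ParetoDominates pref μ' μ := by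
  refine ⟨fun b => ?_, ⟨a (Classical.arbitrary ι), hstrict _⟩⟩
  by_cases hb : ∃ i, a i = b
  · obtain ⟨i, rfl⟩ := hb
    exact Or.inr (hstrict i)
  · exact Or.inl (hfix b fun i hi => hb ⟨i, hi⟩)

theorem eq_update_comp_viaEmbedding_finRotate {A R : Type*} [DecidableEq A] {m : ℕ}
    (hm : 1 ≤ m) (a : Fin m ↪ A) {μ μ' : A → R} {rstar : R}
    (hchain : ∀ (i : ℕ) (h : i + 1 < m), μ' (a ⟨i, by omega⟩) = μ (a ⟨i + 1, h⟩))
    (hlast : μ' (a ⟨m - 1, by omega⟩) = rstar)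
    (hfix : ∀ b : A, (∀ i : Fin m, a i ≠ b) → μ' b = μ b) :
    μ' = Function.update (μ ∘ (finRotate m).viaEmbedding a) (a ⟨m - 1, by omega⟩) rstar := by
  funext x
  by_cases hx : x = a ⟨m - 1, by omega⟩
  · rw [hx, update_self, hlast]
  rw [update_of_ne hx, comp_apply]
  by_cases hrange : x ∈ Set.range a
  · obtain ⟨⟨i, hi⟩, rfl⟩ := hrange
    have hsucc : i + 1 < m := by
      by_contra
      exact hx (congrArg a (Fin.ext (by simp only; omega)))
    rw [Equiv.Perm.viaEmbedding_apply, finRotate_mk_of_succ_lt hsucc, hchain i hsucc]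
  · rw [Equiv.Perm.viaEmbedding_apply_of_notMem _ _ _ hrange]
    exact hfix x fun i hi => hrange ⟨i, hi⟩

/-- shifting assignments along a chain of `m ≥ 1` distinct agents that
terminates at a resource `rstar` with residual capacity yields a feasible assignment
that Pareto-dominates `μ`: every agent on the chain is strictly better off and every
other agent's assignment is unchanged; in particular `μ` is not Pareto optimal. -/
theorem chain_trade_pareto_improves
    {A R : Type*} [Fintype A] [DecidableEq R]
    (q : R → ℕ) (pref : A → R → R → Prop)
    (μ : A → R) (hfeas : Feasible q μ)
    (m : ℕ) (hm : 1 ≤ m) (a : Fin m → A) (hinj : Function.Injective a)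
    (rstar : R)
    (hres : (Finset.univ.filter fun x : A => μ x = rstar).card < q rstar)
    (hchain : ∀ (i : ℕ) (h : i + 1 < m),
      pref (a ⟨i, Nat.lt_of_succ_lt h⟩) (μ (a ⟨i + 1, h⟩)) (μ (a ⟨i, Nat.lt_of_succ_lt h⟩)))
    (hlast : pref (a ⟨m - 1, by omega⟩) rstar (μ (a ⟨m - 1, by omega⟩)))
    (μ' : A → R)
    (hμ'chain : ∀ (i : ℕ) (h : i + 1 < m),
      μ' (a ⟨i, Nat.lt_of_succ_lt h⟩) = μ (a ⟨i + 1, h⟩))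
    (hμ'last : μ' (a ⟨m - 1, by omega⟩) = rstar)
    (hμ'fix : ∀ b : A, (∀ i : Fin m, a i ≠ b) → μ' b = μ b) :
    Feasible q μ' ∧
    (∀ i : Fin m, pref (a i) (μ' (a i)) (μ (a i))) ∧
    (∀ b : A, (∀ i : Fin m, a i ≠ b) → μ' b = μ b) ∧
    ParetoDominates pref μ' μ ∧
    ¬ ParetoOptimal q pref μ := by
  classical
  have hbetter : ∀ i : Fin m, pref (a i) (μ' (a i)) (μ (a i)) := by
    rintro ⟨i, hi⟩
    by_cases hsucc : i + 1 < m
    · rw [hμ'chain i hsucc]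
      exact hchain i hsucc
    · obtain rfl : i = m - 1 := by omega
      rw [hμ'last]
      exact hlast
  have hfeas' : Feasible q μ' := by
    rw [eq_update_comp_viaEmbedding_finRotate hm ⟨a, hinj⟩ hμ'chain hμ'last hμ'fix]
    have hσ := ((finRotate m).viaEmbedding ⟨a, hinj⟩).injective
    exact (hfeas.comp_injective hσ).update _
      ((card_filter_comp_le_of_injective μ hσ rstar).trans_lt hres)
  have : Nonempty (Fin m) := ⟨⟨0, hm⟩⟩
  have hdom := ParetoDominates.of_strict_on_range a hbetter hμ'fix
  exact ⟨hfeas', hbetter, hμ'fix, hdom, fun hopt => hopt μ' hfeas' hdom⟩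
end

section
/- Suppose Σ_{r∈R} q(r) ≥ n = |A|, and let μ be the assignment produced by the serial priority rule for some enumeration a_1, …, a_n of A (each agent receives its most preferred resource among those with residual capacity at its step). Then μ is Pareto optimal: there is no feasible assignment μ′ with μ′(a) ⪰_a μ(a) for all a ∈ A and μ′(a) ≻_a μ(a) for some a ∈ A. -/
/-- Resource `r` is available at step `k` if fewer than `q r` of the agents processed
before step `k` have been assigned `r`. -/
def Available {R : Type*} [DecidableEq R] {n : ℕ} (q : R → ℕ) (μ : Fin n → R)
    (k : Fin n) (r : R) : Prop :=
  (Finset.univ.filter fun j : Fin n => j < k ∧ μ j = r).card < q r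

/-- `μ` is produced by the serial priority rule: each agent `k` receives an available
resource at its step, and that resource is the `pref k`-greatest available one. -/
def IsSerial {R : Type*} [DecidableEq R] {n : ℕ} (pref : Fin n → R → R → Prop)
    (q : R → ℕ) (μ : Fin n → R) : Prop :=
  ∀ k : Fin n, Available q μ k (μ k) ∧
    ∀ r : R, Available q μ k r → r ≠ μ k → pref k (μ k) r

/-- if total capacity is at least the number of agents `n ≥ 1` and `μ` is
produced by the serial priority rule (for strict total-order preferences), then `μ` is
Pareto optimal: no feasible assignment Pareto-dominates it. -/
theorem serial_rule_pareto_optimal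
    {R : Type*} [Fintype R] [DecidableEq R] {n : ℕ} (hn : 1 ≤ n)
    (q : R → ℕ) (hq : n ≤ ∑ r : R, q r)
    (pref : Fin n → R → R → Prop)
    (hpref : ∀ a : Fin n, IsStrictTotalOrder R (pref a))
    (μ : Fin n → R) (hserial : IsSerial pref q μ) :
    ¬ ∃ μ' : Fin n → R, Feasible q μ' ∧ ParetoDominates pref μ' μ := by
  rintro ⟨μ', hfeas, hweak, a0, ha0⟩
  classical
  -- take the least agent strictly improved
  have hne : ({a : Fin n | pref a (μ' a) (μ a)} : Set (Fin n)).Nonempty := ⟨a0, ha0⟩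
  obtain ⟨k, hk, hkmin⟩ := Set.exists_min_image _ id (Set.toFinite _) hne
  simp only [Set.mem_setOf_eq, id] at hk hkmin
  -- for j < k, μ' j = μ j
  have heq : ∀ j : Fin n, j < k → μ' j = μ j := by
    intro j hj
    rcases hweak j with h | h
    · exact h
    · exact absurd (hkmin j h) (not_le.mpr hj)
  -- μ' k ≠ μ k
  have hne' : μ' k ≠ μ k := by
    intro h
    haveI := hpref k
    exact irrefl (μ k) (h ▸ hk)
  -- μ' k is not available at step k
  have hnav : ¬ Available q μ k (μ' k) := by
    intro hav
    haveI := hpref k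
    exact asymm hk ((hserial k).2 _ hav hne')
  unfold Available at hnav
  push_neg at hnav
  have hsub : insert k (Finset.univ.filter fun j : Fin n => j < k ∧ μ j = μ' k)
      ⊆ Finset.univ.filter fun x : Fin n => μ' x = μ' k := by
    intro x hx
    simp only [Finset.mem_insert, Finset.mem_filter, Finset.mem_univ, true_and] at hx ⊢
    rcases hx with rfl | ⟨hlt, hx⟩
    · rfl
    · rw [heq x hlt]; exact hx
  have hknot : k ∉ (Finset.univ.filter fun j : Fin n => j < k ∧ μ j = μ' k) := by
    simp
  have := Finset.card_le_card hsub
  rw [Finset.card_insert_of_notMem hknot] at this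
  have := hfeas (μ' k)
  omega
end

section
/- Suppose Σ_{r∈R} q(r) ≥ n = |A|, let ω : A → R be an endowment, and let μ be the assignment produced by the serial priority rule for an enumeration a_1, …, a_n of A that is endowment-conserving for μ and ω. Then μ is core stable: there is no nonempty coalition A′ ⊆ A together with a reallocation μ′ : A′ → R of the coalition's endowed units — i.e., |{a ∈ A′ : μ′(a) = r}| ≤ |{c ∈ A′ : ω(c) = r}| for every resource r — such that μ′(a) ≻_a μ(a) for every a ∈ A′. -/
/-- The enumeration is endowment-conserving for `μ` and `ω`: for every resource `r` and
every step `k`, the units of `r` consumed before step `k` together with the units of `r`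
still endowed to agents at steps `≥ k` do not exceed the capacity of `r`. -/
def EndowmentConserving {R : Type*} [DecidableEq R] {n : ℕ} (q : R → ℕ)
    (μ ω : Fin n → R) : Prop :=
  ∀ (r : R) (k : Fin n),
    (Finset.univ.filter fun j : Fin n => j < k ∧ μ j = r).card +
      (Finset.univ.filter fun j : Fin n => k ≤ j ∧ ω j = r).card ≤ q r

/-!
Let `k` be the earliest member of a blocking coalition. The unit `μ' k` that the coalition
gives to `k` is endowed to some member `c`, and `k ≤ c`; by endowment conservation that unit
is still available at step `k`, so the serial rule gives `k` something at least as good,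
contradicting `μ' k ≻ₖ μ k`.
-/

theorem Finset.exists_mem_eq_of_card_filter_le {α β : Type*} [DecidableEq β] {s : Finset α}
    {f g : α → β} (h : ∀ r, (s.filter fun a => f a = r).card ≤ (s.filter fun c => g c = r).card)
    {a : α} (ha : a ∈ s) : ∃ c ∈ s, g c = f a := by
  have hfa : a ∈ s.filter fun a' => f a' = f a := Finset.mem_filter.mpr ⟨ha, rfl⟩
  obtain ⟨c, hc⟩ := Finset.card_pos.mp ((Finset.card_pos.mpr ⟨a, hfa⟩).trans_le (h (f a)))
  exact ⟨c, (Finset.mem_filter.mp hc).1, (Finset.mem_filter.mp hc).2⟩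

section SerialRule

variable {R : Type*} [DecidableEq R] {n : ℕ} {q : R → ℕ} {μ ω : Fin n → R}

theorem EndowmentConserving.available (hcons : EndowmentConserving q μ ω) {k c : Fin n}
    (hkc : k ≤ c) : Available q μ k (ω c) := by
  have hpos : 0 < (Finset.univ.filter fun j : Fin n => k ≤ j ∧ ω j = ω c).card :=
    Finset.card_pos.mpr ⟨c, by simp [hkc]⟩
  have := hcons (ω c) k
  unfold Available
  omega

theorem IsSerial.not_lt_of_available {pref : Fin n → R → R → Prop}
    (hserial : IsSerial pref q μ) {k : Fin n} [IsStrictOrder R (pref k)] {r : R}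
    (hr : Available q μ k r) : ¬ pref k r (μ k) := by
  intro hlt
  rcases eq_or_ne r (μ k) with rfl | hne
  · exact irrefl _ hlt
  · exact irrefl _ (_root_.trans ((hserial k).2 r hr hne) hlt)

end SerialRule

theorem serial_rule_core_stable_general
    {R : Type*} [DecidableEq R] {n : ℕ}
    (q : R → ℕ)
    (pref : Fin n → R → R → Prop)
    (hpref : ∀ a : Fin n, IsStrictTotalOrder R (pref a))
    (ω μ : Fin n → R) (hserial : IsSerial pref q μ)
    (hcons : EndowmentConserving q μ ω) :
    ¬ ∃ (A' : Finset (Fin n)) (μ' : Fin n → R), A'.Nonempty ∧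
      (∀ r : R, (A'.filter fun a => μ' a = r).card ≤ (A'.filter fun c => ω c = r).card) ∧
      ∀ a ∈ A', pref a (μ' a) (μ a) := by
  rintro ⟨A', μ', hne, hrealloc, hbetter⟩
  set k := A'.min' hne
  have hk : k ∈ A' := A'.min'_mem hne
  obtain ⟨c, hc, hωc⟩ := Finset.exists_mem_eq_of_card_filter_le hrealloc hk
  have havail : Available q μ k (μ' k) := hωc ▸ hcons.available (A'.min'_le c hc)
  have := hpref k
  exact hserial.not_lt_of_available havail (hbetter k hk)

/-- if total capacity is at least the number of agents `n ≥ 1`, `ω` is an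
endowment, and `μ` is produced by the serial priority rule for an enumeration that is
endowment-conserving for `μ` and `ω`, then `μ` is core stable: no nonempty coalition
`A'` can reallocate only its own endowed units among its members so that every member
is strictly better off than under `μ`. -/
theorem serial_rule_core_stable
    {R : Type*} [Fintype R] [DecidableEq R] {n : ℕ} (hn : 1 ≤ n)
    (q : R → ℕ) (hq : n ≤ ∑ r : R, q r)
    (pref : Fin n → R → R → Prop)
    (hpref : ∀ a : Fin n, IsStrictTotalOrder R (pref a))
    (ω μ : Fin n → R) (hserial : IsSerial pref q μ)
    (hcons : EndowmentConserving q μ ω) :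
    ¬ ∃ (A' : Finset (Fin n)) (μ' : Fin n → R), A'.Nonempty ∧
      (∀ r : R, (A'.filter fun a => μ' a = r).card ≤ (A'.filter fun c => ω c = r).card) ∧
      ∀ a ∈ A', pref a (μ' a) (μ a) :=
  serial_rule_core_stable_general q pref hpref ω μ hserial hcons
end
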